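/- Let ψ : ℝ × (0,∞)² → ℝ be defined by ψ(η₁,η₂,η₃) = ½η₁² + ¼(η₂ ln η₂ + η₃ ln η₃). Then: (a) the matrix of second partial derivatives of ψ at η is diag(1, 1/(4η₂), 1/(4η₃)), and for all x ∈ ℝ, y, z > 0, with J = diag(1, 2y, 2z) the Jacobian of (x,y,z) ↦ (x, y², z²), one has Jᵀ · Hess ψ(x, y², z²) · J equal to the 3×3 identity matrix; (b) ∇ψ(η) = (η₁, ¼ ln η₂ + ¼, ¼ ln η₃ + ¼) and ⟨∇ψ(η), η⟩ − ψ(η) = ½η₁² + ¼(η₂ + η₃). (This is the Smorodinski–Winternitz system (IIb), whose Hessian structure is not self-dual.) -/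

import Mathlib

/-!
`ψ` is additively separable, `ψ(a, b, c) = a²/2 + b log b/4 + c log c/4`, so every mixed
partial derivative vanishes and the Hessian is the diagonal matrix of the one-variable second
derivatives `1`, `1/(4b)`, `1/(4c)` (from `(s log s)'' = 1/s`). Under `b = y²`, `c = z²` the
Jacobian `diag(1, 2y, 2z)` rescales these to `1`. The gradient comes from `(s log s)' = log s + 1`,
and in `⟨∇ψ, η⟩ − ψ` the `s log s` terms cancel.
-/

open Real Set Matrix

/-- The Hessian potential of the Smorodinski–Winternitz system (IIb)
in its Hessian coordinates. -/
noncomputable def ψ (a b c : ℝ) : ℝ := a ^ 2 / 2 + (b * log b + c * log c) / 4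

/-- Partial derivative with respect to the first variable. -/
noncomputable def d1 (f : ℝ → ℝ → ℝ → ℝ) (a b c : ℝ) : ℝ := deriv (fun s => f s b c) a

/-- Partial derivative with respect to the second variable. -/
noncomputable def d2 (f : ℝ → ℝ → ℝ → ℝ) (a b c : ℝ) : ℝ := deriv (fun s => f a s c) b

/-- Partial derivative with respect to the third variable. -/
noncomputable def d3 (f : ℝ → ℝ → ℝ → ℝ) (a b c : ℝ) : ℝ := deriv (fun s => f a b s) c

/-- The matrix of second partial derivatives of a function of three variables. -/
noncomputable def Hess (f : ℝ → ℝ → ℝ → ℝ) (a b c : ℝ) : Matrix (Fin 3) (Fin 3) ℝ :=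
  !![d1 (d1 f) a b c, d1 (d2 f) a b c, d1 (d3 f) a b c;
     d2 (d1 f) a b c, d2 (d2 f) a b c, d2 (d3 f) a b c;
     d3 (d1 f) a b c, d3 (d2 f) a b c, d3 (d3 f) a b c]

/-- The Jacobian matrix of the coordinate change `(x,y,z) ↦ (x, y², z²)`. -/
noncomputable def J (y z : ℝ) : Matrix (Fin 3) (Fin 3) ℝ :=
  !![1, 0, 0; 0, 2 * y, 0; 0, 0, 2 * z]

def addSeparable (u v w : ℝ → ℝ) (a b c : ℝ) : ℝ := u a + v b + w c

section AddSeparable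

variable (u v w : ℝ → ℝ)

lemma d1_addSeparable : d1 (addSeparable u v w) = addSeparable (deriv u) 0 0 := by
  funext a b c
  simp [d1, addSeparable]

lemma d2_addSeparable : d2 (addSeparable u v w) = addSeparable 0 (deriv v) 0 := by
  funext a b c
  simp [d2, addSeparable]

lemma d3_addSeparable : d3 (addSeparable u v w) = addSeparable 0 0 (deriv w) := by
  funext a b c
  simp [d3, addSeparable]

lemma hess_addSeparable (a b c : ℝ) :
    Hess (addSeparable u v w) a b c =
      diagonal ![deriv^[2] u a, deriv^[2] v b, deriv^[2] w c] := by
  simp [Hess, diagonal_vec3, d1_addSeparable, d2_addSeparable, d3_addSeparable, addSeparable]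

end AddSeparable

lemma ψ_eq_addSeparable :
    ψ = addSeparable (fun a => a ^ 2 / 2) (fun b => b * log b / 4) (fun c => c * log c / 4) := by
  funext a b c
  simp only [ψ, addSeparable]
  ring

lemma deriv_sq_div_two : deriv (fun a : ℝ => a ^ 2 / 2) = id := by
  funext a
  simp

lemma deriv_mul_log_div_four {s : ℝ} (hs : s ≠ 0) :
    deriv (fun s => s * log s / 4) s = (log s + 1) / 4 := by
  rw [deriv_div_const, deriv_mul_log hs]

lemma deriv2_mul_log_div_four (s : ℝ) :
    deriv^[2] (fun s => s * log s / 4) s = 1 / (4 * s) := by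
  have h : deriv (fun s => s * log s / 4) = fun s => deriv (fun s => s * log s) s / 4 := by
    funext s
    exact deriv_div_const 4
  have h' : deriv (deriv fun s => s * log s) s = s⁻¹ := deriv2_mul_log s
  rw [Function.iterate_succ_apply, Function.iterate_one, h, deriv_div_const, h']
  ring

-- No sign condition: `log` is `log |·|`, and at `0` both sides are junk zeros (`1 / 0 = 0`).
lemma hess_ψ (a b c : ℝ) :
    Hess ψ a b c = diagonal ![1, 1 / (4 * b), 1 / (4 * c)] := by
  rw [ψ_eq_addSeparable, hess_addSeparable, deriv2_mul_log_div_four,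
    deriv2_mul_log_div_four]
  simp [deriv_sq_div_two]

lemma J_eq_diagonal (y z : ℝ) : J y z = diagonal ![1, 2 * y, 2 * z] := by
  rw [diagonal_vec3]
  rfl

lemma transpose_J_mul_hess_ψ_mul_J (x : ℝ) {y z : ℝ} (hy : y ≠ 0) (hz : z ≠ 0) :
    (J y z)ᵀ * Hess ψ x (y ^ 2) (z ^ 2) * J y z = 1 := by
  have rescale : ∀ t : ℝ, t ≠ 0 → 2 * t * (1 / (4 * t ^ 2)) * (2 * t) = 1 := by
    intro t ht
    field_simp
    ring
  rw [J_eq_diagonal, hess_ψ, diagonal_transpose, diagonal_mul_diagonal, diagonal_mul_diagonal,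
    ← diagonal_one]
  congr 1
  funext i
  fin_cases i
  · simp
  · exact rescale y hy
  · exact rescale z hz

lemma d1_ψ (a b c : ℝ) : d1 ψ a b c = a := by
  simp [ψ_eq_addSeparable, d1_addSeparable, addSeparable]

lemma d2_ψ {a b c : ℝ} (hb : b ≠ 0) : d2 ψ a b c = (log b + 1) / 4 := by
  simp [ψ_eq_addSeparable, d2_addSeparable, addSeparable, deriv_mul_log_div_four hb]

lemma d3_ψ {a b c : ℝ} (hc : c ≠ 0) : d3 ψ a b c = (log c + 1) / 4 := by
  simp [ψ_eq_addSeparable, d3_addSeparable, addSeparable, deriv_mul_log_div_four hc]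

/-- Smorodinski–Winternitz system (IIb), `ψ(η) = ½η₁² + ¼(η₂ ln η₂ + η₃ ln η₃)`:
(a) `Hess ψ(η) = diag(1, 1/(4η₂), 1/(4η₃))` and `(x, y², z²)` are Hessian
coordinates for Euclidean 3-space (`Jᵀ · Hess ψ(x,y²,z²) · J = I₃`);
(b) the dual Hessian coordinates are
`∇ψ(η) = (η₁, ¼ ln η₂ + ¼, ¼ ln η₃ + ¼)` and the dual Hessian potential is
`⟨∇ψ(η), η⟩ − ψ(η) = ½η₁² + ¼(η₂ + η₃)`. -/
theorem sw_IIb_hessian_and_dual :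
    (∀ a b c : ℝ, 0 < b → 0 < c →
      Hess ψ a b c = !![1, 0, 0; 0, 1 / (4 * b), 0; 0, 0, 1 / (4 * c)]) ∧
    (∀ x y z : ℝ, 0 < y → 0 < z →
      (J y z)ᵀ * Hess ψ x (y ^ 2) (z ^ 2) * J y z = 1) ∧
    ∀ a b c : ℝ, 0 < b → 0 < c →
      d1 ψ a b c = a ∧
      d2 ψ a b c = (1 / 4) * log b + 1 / 4 ∧
      d3 ψ a b c = (1 / 4) * log c + 1 / 4 ∧
      d1 ψ a b c * a + d2 ψ a b c * b + d3 ψ a b c * c - ψ a b c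
        = a ^ 2 / 2 + (b + c) / 4 := by
  refine ⟨fun a b c _ _ => by rw [hess_ψ, diagonal_vec3], ?_, ?_⟩
  · exact fun x y z hy hz => transpose_J_mul_hess_ψ_mul_J x hy.ne' hz.ne'
  · intro a b c hb hc
    rw [d1_ψ, d2_ψ hb.ne', d3_ψ hc.ne']
    refine ⟨rfl, by ring, by ring, ?_⟩
    simp only [ψ]
    ring
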